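/- arXiv:2306.11224 — 3 statements merged into one kernel-verified Lean document; each statement's English description precedes it below -/
import Mathlib

section
/- Step II normalization (Eq. (5)): if m ≥ 1 and (v, u) minimizes Δ over TGP-feasible pairs for τ = 1, then α := ∑ i, v i * x o i satisfies α ≥ m > 0, and (α⁻¹ • v, α⁻¹ • u) minimizes Δ over TGP-feasible pairs for τ = α⁻¹ and satisfies the normalization ∑ i, (α⁻¹ * v i) * x o i = 1. -/
/-!
Each of the `m` constraints `x o i * v i ≥ 1` contributes at least `1` to `α`, so `α ≥ m`.
Scaling by `c > 0` maps the TGP-feasible pairs for `τ` bijectively onto those for `c * τ`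
and multiplies every virtual gap by `c`, so it carries minimizers to minimizers; take `c = α⁻¹`.
-/

open Finset

/-- TSP-feasibility: `π, Q, P` nonnegative, input constraints
`(∑ j, x j i * π j) + Q i * x o i = x o i`, and output constraints
`∑ j, y j r * π j = (1 + P r) * y o r`. -/
def TSPFeasible {n m s : ℕ} (x : Fin n → Fin m → ℝ) (y : Fin n → Fin s → ℝ)
    (o : Fin n) (π : Fin n → ℝ) (Q : Fin m → ℝ) (P : Fin s → ℝ) : Prop :=
  (∀ j, 0 ≤ π j) ∧ (∀ i, 0 ≤ Q i) ∧ (∀ r, 0 ≤ P r) ∧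
  (∀ i, (∑ j, x j i * π j) + Q i * x o i = x o i) ∧
  (∀ r, ∑ j, y j r * π j = (1 + P r) * y o r)

/-- TGP-feasibility for `τ`: nonnegative virtual gap for every unit `j`,
and each virtual price of unit `o` bounded below by `τ`. -/
def TGPFeasible {n m s : ℕ} (x : Fin n → Fin m → ℝ) (y : Fin n → Fin s → ℝ)
    (o : Fin n) (τ : ℝ) (v : Fin m → ℝ) (u : Fin s → ℝ) : Prop :=
  (∀ j, 0 ≤ ∑ i, v i * x j i - ∑ r, u r * y j r) ∧
  (∀ i, τ ≤ x o i * v i) ∧ (∀ r, τ ≤ y o r * u r)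

variable {n m s : ℕ} {x : Fin n → Fin m → ℝ} {y : Fin n → Fin s → ℝ} {o : Fin n}

def virtualGap (x : Fin n → Fin m → ℝ) (y : Fin n → Fin s → ℝ) (j : Fin n)
    (v : Fin m → ℝ) (u : Fin s → ℝ) : ℝ :=
  ∑ i, v i * x j i - ∑ r, u r * y j r

def IsTGPMinimizer (x : Fin n → Fin m → ℝ) (y : Fin n → Fin s → ℝ) (o : Fin n) (τ : ℝ)
    (v : Fin m → ℝ) (u : Fin s → ℝ) : Prop :=
  TGPFeasible x y o τ v u ∧
    ∀ v' u', TGPFeasible x y o τ v' u' → virtualGap x y o v u ≤ virtualGap x y o v' u'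

theorem virtualGap_smul (j : Fin n) (c : ℝ) (v : Fin m → ℝ) (u : Fin s → ℝ) :
    virtualGap x y j (c • v) (c • u) = c * virtualGap x y j v u := by
  simp only [virtualGap, Pi.smul_apply, smul_eq_mul, mul_sub, mul_sum, mul_assoc]

namespace TGPFeasible

variable {τ : ℝ} {v : Fin m → ℝ} {u : Fin s → ℝ}

theorem smul (h : TGPFeasible x y o τ v u) {c : ℝ} (hc : 0 ≤ c) :
    TGPFeasible x y o (c * τ) (c • v) (c • u) := by
  obtain ⟨hgap, hv, hu⟩ := h
  refine ⟨fun j => ?_, fun i => ?_, fun r => ?_⟩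
  · show 0 ≤ virtualGap x y j (c • v) (c • u)
    exact (virtualGap_smul j c v u).symm ▸ mul_nonneg hc (hgap j)
  · simpa only [Pi.smul_apply, smul_eq_mul, mul_left_comm] using
      mul_le_mul_of_nonneg_left (hv i) hc
  · simpa only [Pi.smul_apply, smul_eq_mul, mul_left_comm] using
      mul_le_mul_of_nonneg_left (hu r) hc

theorem card_mul_le_sum (h : TGPFeasible x y o τ v u) : (m : ℝ) * τ ≤ ∑ i, v i * x o i := by
  have := card_nsmul_le_sum univ (fun i => v i * x o i) τ fun i _ =>
    (h.2.1 i).trans_eq (mul_comm _ _)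
  simpa only [card_univ, Fintype.card_fin, nsmul_eq_mul] using this

end TGPFeasible

theorem IsTGPMinimizer.smul {τ : ℝ} {v : Fin m → ℝ} {u : Fin s → ℝ}
    (h : IsTGPMinimizer x y o τ v u) {c : ℝ} (hc : 0 < c) :
    IsTGPMinimizer x y o (c * τ) (c • v) (c • u) := by
  refine ⟨h.1.smul hc.le, fun v' u' h' => ?_⟩
  have hback : TGPFeasible x y o τ (c⁻¹ • v') (c⁻¹ • u') := by
    simpa only [inv_mul_cancel_left₀ hc.ne'] using h'.smul (inv_nonneg.mpr hc.le)
  calc virtualGap x y o (c • v) (c • u) = c * virtualGap x y o v u := virtualGap_smul o c v u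
    _ ≤ c * (c⁻¹ * virtualGap x y o v' u') := by
        rw [← virtualGap_smul o c⁻¹ v' u']; exact mul_le_mul_of_nonneg_left (h.2 _ _ hback) hc.le
    _ = virtualGap x y o v' u' := mul_inv_cancel_left₀ hc.ne' _

theorem step_two_normalization_general
    (n m s : ℕ) (x : Fin n → Fin m → ℝ) (y : Fin n → Fin s → ℝ) (o : Fin n)
    (hm : 1 ≤ m)
    (v : Fin m → ℝ) (u : Fin s → ℝ)
    (hfeas : TGPFeasible x y o 1 v u)
    (hmin : ∀ v' u', TGPFeasible x y o 1 v' u' →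
      ∑ i, v i * x o i - ∑ r, u r * y o r ≤ ∑ i, v' i * x o i - ∑ r, u' r * y o r)
    (α : ℝ) (hα : α = ∑ i, v i * x o i) :
    (m : ℝ) ≤ α ∧ (0 : ℝ) < (m : ℝ) ∧
    TGPFeasible x y o α⁻¹ (α⁻¹ • v) (α⁻¹ • u) ∧
    (∀ v' u', TGPFeasible x y o α⁻¹ v' u' →
      ∑ i, (α⁻¹ • v) i * x o i - ∑ r, (α⁻¹ • u) r * y o r
        ≤ ∑ i, v' i * x o i - ∑ r, u' r * y o r) ∧
    ∑ i, (α⁻¹ * v i) * x o i = 1 := by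
  have hm_pos : (0 : ℝ) < m := by exact_mod_cast hm
  have hm_le : (m : ℝ) ≤ α := by rw [hα]; simpa only [mul_one] using hfeas.card_mul_le_sum
  have hα_pos : 0 < α := hm_pos.trans_le hm_le
  have hscaled := IsTGPMinimizer.smul ⟨hfeas, hmin⟩ (inv_pos.mpr hα_pos)
  rw [mul_one] at hscaled
  refine ⟨hm_le, hm_pos, hscaled.1, hscaled.2, ?_⟩
  simp_rw [mul_assoc, ← mul_sum, ← hα, inv_mul_cancel₀ hα_pos.ne']

/-- Step II normalization (Eq. (5)). -/
theorem step_two_normalization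
    (n m s : ℕ) (x : Fin n → Fin m → ℝ) (y : Fin n → Fin s → ℝ) (o : Fin n)
    (hx : ∀ j i, 0 < x j i) (hy : ∀ j r, 0 < y j r)
    (hm : 1 ≤ m)
    (v : Fin m → ℝ) (u : Fin s → ℝ)
    (hfeas : TGPFeasible x y o 1 v u)
    (hmin : ∀ v' u', TGPFeasible x y o 1 v' u' →
      ∑ i, v i * x o i - ∑ r, u r * y o r ≤ ∑ i, v' i * x o i - ∑ r, u' r * y o r)
    (α : ℝ) (hα : α = ∑ i, v i * x o i) :
    (m : ℝ) ≤ α ∧ (0 : ℝ) < (m : ℝ) ∧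
    TGPFeasible x y o α⁻¹ (α⁻¹ • v) (α⁻¹ • u) ∧
    (∀ v' u', TGPFeasible x y o α⁻¹ v' u' →
      ∑ i, (α⁻¹ • v) i * x o i - ∑ r, (α⁻¹ • u) r * y o r
        ≤ ∑ i, v' i * x o i - ∑ r, u' r * y o r) ∧
    ∑ i, (α⁻¹ * v i) * x o i = 1 :=
  step_two_normalization_general n m s x y o hm v u hfeas hmin α hα
end

section
/- The relative boundary efficiency of the benchmark equals 1 (Criterion (ii), PTE case): if (π, Q, P) is TSP-feasible, (v, u) is TGP-feasible for τ, and τ * (∑ i, Q i + ∑ r, P r) = ∑ i, v i * x o i - ∑ r, u r * y o r, then the benchmark targets x̂ i = x o i * (1 - Q i) and ŷ r = y o r * (1 + P r) satisfy ∑ i, v i * x̂ i = ∑ r, u r * ŷ r. -/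
/-!
The benchmark is the `π`-combination of all units, so the virtual gap of the targets is
`∑ j, π j * gap j ≥ 0`. On the other hand it is the gap of `o` minus the slacks `Q`, `P` valued at
the virtual prices of `o`; these prices are at least `τ`, so the valued slacks are at least
`τ * (∑ Q + ∑ P)`, which by assumption is the gap of `o`. Hence the gap of the targets is also `≤ 0`.
-/

open Finset

lemma sum_mul_sum_mul_comm {ι κ : Type*} [Fintype ι] [Fintype κ]
    (v : κ → ℝ) (a : ι → κ → ℝ) (π : ι → ℝ) :
    ∑ k, v k * ∑ j, a j k * π j = ∑ j, π j * ∑ k, v k * a j k := by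
  simp only [mul_sum]
  rw [sum_comm]
  exact sum_congr rfl fun _ _ => sum_congr rfl fun _ _ => by ring

lemma mul_sum_le_sum_mul_of_le {ι : Type*} [Fintype ι] {τ : ℝ} {c q : ι → ℝ}
    (hc : ∀ i, τ ≤ c i) (hq : ∀ i, 0 ≤ q i) :
    τ * ∑ i, q i ≤ ∑ i, c i * q i := by
  rw [mul_sum]
  exact sum_le_sum fun i _ => mul_le_mul_of_nonneg_right (hc i) (hq i)

section

variable {n m s : ℕ} {x : Fin n → Fin m → ℝ} {y : Fin n → Fin s → ℝ} {o : Fin n}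

lemma sum_targets_sub_eq_sub_sum_slacks (Q : Fin m → ℝ) (P : Fin s → ℝ)
    (v : Fin m → ℝ) (u : Fin s → ℝ) :
    ∑ i, v i * (x o i * (1 - Q i)) - ∑ r, u r * (y o r * (1 + P r)) =
      (∑ i, v i * x o i - ∑ r, u r * y o r) -
        (∑ i, x o i * v i * Q i + ∑ r, y o r * u r * P r) := by
  simp only [mul_sub, mul_add, mul_one, sum_sub_distrib, sum_add_distrib]
  have hQ : ∑ i, v i * (x o i * Q i) = ∑ i, x o i * v i * Q i :=
    sum_congr rfl fun _ _ => by ring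
  have hP : ∑ r, u r * (y o r * P r) = ∑ r, y o r * u r * P r :=
    sum_congr rfl fun _ _ => by ring
  rw [hQ, hP]
  ring

lemma TSPFeasible.sum_targets_sub_eq {π : Fin n → ℝ} {Q : Fin m → ℝ} {P : Fin s → ℝ}
    (h : TSPFeasible x y o π Q P) (v : Fin m → ℝ) (u : Fin s → ℝ) :
    ∑ i, v i * (x o i * (1 - Q i)) - ∑ r, u r * (y o r * (1 + P r)) =
      ∑ j, π j * (∑ i, v i * x j i - ∑ r, u r * y j r) := by
  obtain ⟨-, -, -, hin, hout⟩ := h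
  have hx : ∀ i, x o i * (1 - Q i) = ∑ j, x j i * π j := fun i => by linarith [hin i]
  have hy : ∀ r, y o r * (1 + P r) = ∑ j, y j r * π j := fun r => by linarith [hout r]
  simp only [hx, hy, sum_mul_sum_mul_comm, mul_sub, sum_sub_distrib]

end

theorem benchmark_boundary_efficiency_general
    (n m s : ℕ) (x : Fin n → Fin m → ℝ) (y : Fin n → Fin s → ℝ) (o : Fin n)
    (τ : ℝ) (π : Fin n → ℝ) (Q : Fin m → ℝ) (P : Fin s → ℝ)
    (v : Fin m → ℝ) (u : Fin s → ℝ)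
    (hTSP : TSPFeasible x y o π Q P) (hTGP : TGPFeasible x y o τ v u)
    (heq : τ * (∑ i, Q i + ∑ r, P r) = ∑ i, v i * x o i - ∑ r, u r * y o r) :
    ∑ i, v i * (x o i * (1 - Q i)) = ∑ r, u r * (y o r * (1 + P r)) := by
  have htargets_gap := hTSP.sum_targets_sub_eq v u
  obtain ⟨hπ, hQ, hP, -, -⟩ := hTSP
  obtain ⟨hgap, hv, hu⟩ := hTGP
  refine sub_eq_zero.mp (le_antisymm ?_ ?_)
  · have hslackQ := mul_sum_le_sum_mul_of_le hv hQ
    have hslackP := mul_sum_le_sum_mul_of_le hu hP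
    rw [sum_targets_sub_eq_sub_sum_slacks]
    linarith
  · rw [htargets_gap]
    exact sum_nonneg fun j _ => mul_nonneg (hπ j) (hgap j)

/-- The relative boundary efficiency of the benchmark equals 1 (Criterion (ii)). -/
theorem benchmark_boundary_efficiency
    (n m s : ℕ) (x : Fin n → Fin m → ℝ) (y : Fin n → Fin s → ℝ) (o : Fin n)
    (hx : ∀ j i, 0 < x j i) (hy : ∀ j r, 0 < y j r)
    (τ : ℝ) (π : Fin n → ℝ) (Q : Fin m → ℝ) (P : Fin s → ℝ)
    (v : Fin m → ℝ) (u : Fin s → ℝ)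
    (hTSP : TSPFeasible x y o π Q P) (hTGP : TGPFeasible x y o τ v u)
    (heq : τ * (∑ i, Q i + ∑ r, P r) = ∑ i, v i * x o i - ∑ r, u r * y o r) :
    ∑ i, v i * (x o i * (1 - Q i)) = ∑ r, u r * (y o r * (1 + P r)) :=
  benchmark_boundary_efficiency_general n m s x y o τ π Q P v u hTSP hTGP heq
end

section
/- Non-peers get zero intensity: if τ > 0, (π, Q, P) is TSP-feasible, (v, u) is TGP-feasible for τ with equal objective values τ * (∑ i, Q i + ∑ r, P r) = ∑ i, v i * x o i - ∑ r, u r * y o r, and a unit j₀ lies strictly below the best efficiency boundary under (v, u), i.e. ∑ i, v i * x j₀ i - ∑ r, u r * y j₀ r > 0, then π j₀ = 0. -/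
/-!
Complementary slackness. Weighting the virtual gaps `g j = ∑ i, v i * x j i - ∑ r, u r * y j r`
by `π` and using the TSP equality constraints gives
`∑ j, π j * g j = g o - ∑ i, Q i * (x o i * v i) - ∑ r, P r * (y o r * u r)`,
and the TGP bounds `τ ≤ x o i * v i`, `τ ≤ y o r * u r` make the right-hand side at most
`g o - τ * (∑ i, Q i + ∑ r, P r)`, which vanishes when the objective values agree.
A sum of nonnegative terms `π j * g j` that is `≤ 0` has all terms zero, so `g j₀ > 0` forces
`π j₀ = 0`.
-/

open Finset

section

variable {ι κ : Type*} [Fintype ι] [Fintype κ]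

theorem sum_mul_sum_mul_comm_s17 {R : Type*} [CommSemiring R] (a : ι → R) (b : κ → R)
    (f : ι → κ → R) :
    ∑ j, a j * ∑ i, b i * f j i = ∑ i, b i * ∑ j, f j i * a j := by
  simp only [mul_sum]
  rw [sum_comm]
  exact sum_congr rfl fun _ _ => sum_congr rfl fun _ _ => by ring

theorem eq_zero_of_sum_mul_nonpos {a b : ι → ℝ} (ha : ∀ j, 0 ≤ a j) (hb : ∀ j, 0 ≤ b j)
    (hsum : ∑ j, a j * b j ≤ 0) {j₀ : ι} (hj₀ : 0 < b j₀) : a j₀ = 0 := by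
  have hnn : ∀ j ∈ univ, 0 ≤ a j * b j := fun j _ => mul_nonneg (ha j) (hb j)
  have hzero := (sum_eq_zero_iff_of_nonneg hnn).mp
    (le_antisymm hsum (sum_nonneg hnn)) j₀ (mem_univ j₀)
  exact (mul_eq_zero.mp hzero).resolve_right hj₀.ne'

end

variable {n m s : ℕ} {x : Fin n → Fin m → ℝ} {y : Fin n → Fin s → ℝ} {o : Fin n}

theorem TSPFeasible.sum_mul_gap_eq {π : Fin n → ℝ} {Q : Fin m → ℝ} {P : Fin s → ℝ}
    (h : TSPFeasible x y o π Q P) (v : Fin m → ℝ) (u : Fin s → ℝ) :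
    ∑ j, π j * (∑ i, v i * x j i - ∑ r, u r * y j r) =
      (∑ i, v i * x o i - ∑ r, u r * y o r)
        - ∑ i, Q i * (x o i * v i) - ∑ r, P r * (y o r * u r) := by
  obtain ⟨-, -, -, hin, hout⟩ := h
  have hin' : ∀ i, ∑ j, x j i * π j = x o i - Q i * x o i := fun i => by linarith [hin i]
  simp only [mul_sub, sum_sub_distrib, sum_mul_sum_mul_comm_s17 π, hin', hout]
  simp only [add_mul, mul_add, sum_add_distrib]
  have hv : ∑ i, v i * (Q i * x o i) = ∑ i, Q i * (x o i * v i) :=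
    sum_congr rfl fun _ _ => by ring
  have hu : ∑ r, u r * (P r * y o r) = ∑ r, P r * (y o r * u r) :=
    sum_congr rfl fun _ _ => by ring
  simp only [one_mul, hv, hu]
  ring

theorem TGPFeasible.mul_sum_le {τ : ℝ} {v : Fin m → ℝ} {u : Fin s → ℝ}
    (h : TGPFeasible x y o τ v u) {Q : Fin m → ℝ} {P : Fin s → ℝ}
    (hQ : ∀ i, 0 ≤ Q i) (hP : ∀ r, 0 ≤ P r) :
    τ * (∑ i, Q i + ∑ r, P r) ≤ ∑ i, Q i * (x o i * v i) + ∑ r, P r * (y o r * u r) := by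
  obtain ⟨-, hv, hu⟩ := h
  rw [mul_add, mul_sum, mul_sum]
  exact add_le_add
    (sum_le_sum fun i _ => by rw [mul_comm]; exact mul_le_mul_of_nonneg_left (hv i) (hQ i))
    (sum_le_sum fun r _ => by rw [mul_comm]; exact mul_le_mul_of_nonneg_left (hu r) (hP r))

theorem non_peer_zero_intensity_general
    (n m s : ℕ) (x : Fin n → Fin m → ℝ) (y : Fin n → Fin s → ℝ) (o : Fin n)
    (τ : ℝ) (π : Fin n → ℝ) (Q : Fin m → ℝ) (P : Fin s → ℝ)
    (v : Fin m → ℝ) (u : Fin s → ℝ)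
    (hTSP : TSPFeasible x y o π Q P) (hTGP : TGPFeasible x y o τ v u)
    (heq : τ * (∑ i, Q i + ∑ r, P r) = ∑ i, v i * x o i - ∑ r, u r * y o r)
    (j₀ : Fin n) (hj₀ : 0 < ∑ i, v i * x j₀ i - ∑ r, u r * y j₀ r) :
    π j₀ = 0 := by
  have hbound := hTGP.mul_sum_le hTSP.2.1 hTSP.2.2.1
  have hsum : ∑ j, π j * (∑ i, v i * x j i - ∑ r, u r * y j r) ≤ 0 := by
    rw [hTSP.sum_mul_gap_eq v u]
    linarith
  exact eq_zero_of_sum_mul_nonpos hTSP.1 hTGP.1 hsum hj₀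

/-- Non-peers get zero intensity. -/
theorem non_peer_zero_intensity
    (n m s : ℕ) (x : Fin n → Fin m → ℝ) (y : Fin n → Fin s → ℝ) (o : Fin n)
    (hx : ∀ j i, 0 < x j i) (hy : ∀ j r, 0 < y j r)
    (τ : ℝ) (hτ : 0 < τ) (π : Fin n → ℝ) (Q : Fin m → ℝ) (P : Fin s → ℝ)
    (v : Fin m → ℝ) (u : Fin s → ℝ)
    (hTSP : TSPFeasible x y o π Q P) (hTGP : TGPFeasible x y o τ v u)
    (heq : τ * (∑ i, Q i + ∑ r, P r) = ∑ i, v i * x o i - ∑ r, u r * y o r)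
    (j₀ : Fin n) (hj₀ : 0 < ∑ i, v i * x j₀ i - ∑ r, u r * y j₀ r) :
    π j₀ = 0 :=
  non_peer_zero_intensity_general n m s x y o τ π Q P v u hTSP hTGP heq j₀ hj₀
end
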